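/- arXiv:2603.14306 — 6 statements merged into one kernel-verified Lean document; each statement's English description precedes it below -/
import Mathlib

section
/- For every real x ≥ -1 and every real y ≥ 1, (1 + x)^y ≥ (1 - x²·y)·e^{x·y}. -/
theorem one_add_rpow_ge (x y : ℝ) (hx : -1 ≤ x) (hy : 1 ≤ y) :
    (1 - x ^ 2 * y) * Real.exp (x * y) ≤ (1 + x) ^ y := by
  have h1x : (0:ℝ) ≤ 1 + x := by linarith
  rcases le_or_gt x 1 with hx1 | hx1
  · have hx2 : x ^ 2 ≤ 1 := by nlinarith
    -- Bernoulli: 1 - x²y ≤ (1 - x²)^y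
    have hb : 1 - x ^ 2 * y ≤ (1 - x ^ 2) ^ y := by
      have := one_add_mul_self_le_rpow_one_add (s := -(x^2)) (by linarith) hy
      simpa [mul_comm, sub_eq_add_neg] using this
    -- (1 - x²) * e^x ≤ 1 + x
    have hkey : (1 - x ^ 2) * Real.exp x ≤ 1 + x := by
      have h1 : 1 - x ≤ Real.exp (-x) := by
        have := Real.add_one_le_exp (-x); linarith
      have h2 : (1 - x ^ 2) = (1 + x) * (1 - x) := by ring
      have h3 : (1 + x) * (1 - x) ≤ (1 + x) * Real.exp (-x) :=
        mul_le_mul_of_nonneg_left h1 h1x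
      calc (1 - x ^ 2) * Real.exp x = (1 + x) * (1 - x) * Real.exp x := by rw [h2]
        _ ≤ (1 + x) * Real.exp (-x) * Real.exp x :=
            mul_le_mul_of_nonneg_right h3 (Real.exp_pos x).le
        _ = 1 + x := by rw [mul_assoc, ← Real.exp_add]; simp
    have hsq : (0:ℝ) ≤ 1 - x ^ 2 := by linarith
    have hbase : (0:ℝ) ≤ (1 - x ^ 2) * Real.exp x :=
      mul_nonneg hsq (Real.exp_pos x).le
    have hpow : ((1 - x ^ 2) * Real.exp x) ^ y ≤ (1 + x) ^ y :=
      Real.rpow_le_rpow hbase hkey (by linarith)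
    have heq : ((1 - x ^ 2) * Real.exp x) ^ y
        = (1 - x ^ 2) ^ y * Real.exp (x * y) := by
      rw [Real.mul_rpow hsq (Real.exp_pos x).le, ← Real.exp_mul]
    have hmul : (1 - x ^ 2 * y) * Real.exp (x * y)
        ≤ (1 - x ^ 2) ^ y * Real.exp (x * y) :=
      mul_le_mul_of_nonneg_right hb (Real.exp_pos _).le
    calc (1 - x ^ 2 * y) * Real.exp (x * y)
        ≤ (1 - x ^ 2) ^ y * Real.exp (x * y) := hmul
      _ = ((1 - x ^ 2) * Real.exp x) ^ y := heq.symm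
      _ ≤ (1 + x) ^ y := hpow
  · have : x ^ 2 * y ≥ 1 := by nlinarith
    have hle : (1 - x ^ 2 * y) * Real.exp (x * y) ≤ 0 :=
      mul_nonpos_of_nonpos_of_nonneg (by linarith) (Real.exp_pos _).le
    exact hle.trans (Real.rpow_nonneg h1x y)
end

section
/- Let G be a graph with m edges, let m̃ ≥ e^{-1/10}·m with m̃ > 0, set p = 1/(10√m̃), and let u be a vertex with deg(u) ≤ 2√m̃ and v a vertex with deg(v) ≤ 2√m̃. Draw a random vertex subset S by including each vertex independently with probability p. Then the probability that S contains a neighbor of u other than v, or a neighbor of v other than u, or an edge adjacent to neither u nor v, is at most 1/2. Consequently the 'loneliness' probability that the pair {u,v} is lonely in S is at least 1/2. -/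
/-!
A pair `{u, v}` fails to be lonely in `S` exactly when `S` contains a neighbour of `u` other
than `v`, a neighbour of `v` other than `u`, or both ends of an edge avoiding `u` and `v`.
The union bound over these vertices and edges bounds the failure probability by
`p deg u + p deg v + p² m ≤ 1/5 + 1/5 + 1/10`, since `m ≤ e^{1/10} m̃ ≤ 10 m̃`.
When `G` has no edges `p` may exceed `1`, but then failure is impossible.
-/

open Finset

section Bernoulli

variable {V : Type*} [Fintype V]

noncomputable def bernoulliWeight (p : ℝ) (S : V → Bool) : ℝ :=
  ∏ w, if S w then p else 1 - p

lemma bernoulliWeight_nonneg {p : ℝ} (hp₀ : 0 ≤ p) (hp₁ : p ≤ 1) (S : V → Bool) :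
    0 ≤ bernoulliWeight p S :=
  prod_nonneg fun w _ => by split_ifs <;> linarith

variable [DecidableEq V]

noncomputable def bernoulliProb (p : ℝ) (E : (V → Bool) → Prop) [DecidablePred E] : ℝ :=
  ∑ S, if E S then bernoulliWeight p S else 0

variable {p : ℝ} {E F : (V → Bool) → Prop} [DecidablePred E] [DecidablePred F]

lemma bernoulliProb_congr (h : ∀ S, E S ↔ F S) : bernoulliProb p E = bernoulliProb p F :=
  sum_congr rfl fun S _ => if_congr (h S) rfl rfl

lemma bernoulliProb_forall_mem (p : ℝ) (T : Finset V) :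
    bernoulliProb p (fun S => ∀ x ∈ T, S x = true) = p ^ #T := by
  have hfactor : ∀ S : V → Bool,
      (if ∀ x ∈ T, S x = true then bernoulliWeight p S else 0)
        = ∏ w, if S w then p else if w ∈ T then 0 else 1 - p := by
    intro S
    split_ifs with hS
    · exact prod_congr rfl fun w _ => by by_cases hw : w ∈ T <;> simp [hw, hS]
    · push Not at hS
      obtain ⟨x, hxT, hSx⟩ := hS
      exact (prod_eq_zero (mem_univ x) (by simp [hxT, hSx])).symm
  have hsum : ∀ w, ∑ b : Bool, (if b then p else if w ∈ T then 0 else 1 - p)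
      = if w ∈ T then p else 1 := by
    intro w; by_cases hw : w ∈ T <;> simp [hw]
  calc bernoulliProb p (fun S => ∀ x ∈ T, S x = true)
      = ∏ w, ∑ b : Bool, (if b then p else if w ∈ T then 0 else 1 - p) := by
        rw [bernoulliProb, sum_congr rfl fun S _ => hfactor S, Fintype.prod_sum]
    _ = p ^ #T := by simp_rw [hsum, prod_ite_mem, univ_inter, prod_const]

lemma sum_bernoulliWeight (p : ℝ) : ∑ S : V → Bool, bernoulliWeight p S = 1 := by
  simpa [bernoulliProb] using bernoulliProb_forall_mem p (∅ : Finset V)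

lemma bernoulliProb_not (p : ℝ) (E : (V → Bool) → Prop) [DecidablePred E] :
    bernoulliProb p (fun S => ¬E S) = 1 - bernoulliProb p E := by
  rw [← sum_bernoulliWeight (V := V) p, bernoulliProb, bernoulliProb, eq_sub_iff_add_eq,
    ← sum_add_distrib]
  exact sum_congr rfl fun S _ => by split_ifs <;> simp

lemma bernoulliProb_eq_zero (h : ∀ S, ¬E S) : bernoulliProb p E = 0 :=
  sum_eq_zero fun S _ => if_neg (h S)

variable (hp₀ : 0 ≤ p) (hp₁ : p ≤ 1)
include hp₀ hp₁

lemma bernoulliProb_mono (h : ∀ S, E S → F S) : bernoulliProb p E ≤ bernoulliProb p F :=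
  sum_le_sum fun S _ => by
    split_ifs with hE hF
    · exact le_rfl
    · exact absurd (h S hE) hF
    · exact bernoulliWeight_nonneg hp₀ hp₁ S
    · exact le_rfl

lemma bernoulliProb_or_le :
    bernoulliProb p (fun S => E S ∨ F S) ≤ bernoulliProb p E + bernoulliProb p F := by
  rw [bernoulliProb, bernoulliProb, bernoulliProb, ← sum_add_distrib]
  refine sum_le_sum fun S _ => ?_
  have := bernoulliWeight_nonneg hp₀ hp₁ S
  split_ifs <;> simp_all

lemma bernoulliProb_exists_le_sum {ι : Type*} (s : Finset ι) (E : ι → (V → Bool) → Prop)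
    [∀ i, DecidablePred (E i)] :
    bernoulliProb p (fun S => ∃ i ∈ s, E i S) ≤ ∑ i ∈ s, bernoulliProb p (E i) := by
  classical
  induction s using Finset.induction_on with
  | empty => simp [bernoulliProb_eq_zero]
  | insert i s hi ih =>
    rw [sum_insert hi]
    calc bernoulliProb p (fun S => ∃ j ∈ insert i s, E j S)
        = bernoulliProb p (fun S => E i S ∨ ∃ j ∈ s, E j S) :=
          bernoulliProb_congr fun S => by simp
      _ ≤ _ := (bernoulliProb_or_le hp₀ hp₁).trans (by gcongr)

lemma bernoulliProb_exists_forall_mem_le {ι : Type*} (s : Finset ι) (T : ι → Finset V) :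
    bernoulliProb p (fun S => ∃ i ∈ s, ∀ x ∈ T i, S x = true) ≤ ∑ i ∈ s, p ^ #(T i) :=
  (bernoulliProb_exists_le_sum hp₀ hp₁ s _).trans_eq
    (sum_congr rfl fun i _ => bernoulliProb_forall_mem p (T i))

end Bernoulli

namespace SimpleGraph

variable {V : Type*} (G : SimpleGraph V) (u v : V)

abbrev HasBadEdge (S : V → Bool) : Prop :=
  (∃ w, G.Adj u w ∧ w ≠ v ∧ S w = true) ∨
    (∃ w, G.Adj v w ∧ w ≠ u ∧ S w = true) ∨
    (∃ a b, G.Adj a b ∧ S a = true ∧ S b = true ∧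
      a ≠ u ∧ a ≠ v ∧ b ≠ u ∧ b ≠ v)

abbrev IsLonelyIn (S : V → Bool) : Prop :=
  ∀ a b, G.Adj a b → (S a = true ∨ a = u ∨ a = v) →
    (S b = true ∨ b = u ∨ b = v) → (a = u ∧ b = v) ∨ (a = v ∧ b = u)

lemma isLonelyIn_iff_not_hasBadEdge (S : V → Bool) :
    G.IsLonelyIn u v S ↔ ¬G.HasBadEdge u v S := by
  have hsymm : ∀ {a b}, G.Adj a b → G.Adj b a := G.adj_symm
  have hirrefl : ∀ a, ¬G.Adj a a := G.loopless.irrefl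
  grind

lemma bernoulliProb_hasBadEdge_le [Fintype V] [DecidableEq V] [DecidableRel G.Adj] {p : ℝ}
    (hp₀ : 0 ≤ p) (hp₁ : p ≤ 1) :
    bernoulliProb p (G.HasBadEdge u v)
      ≤ p * G.degree u + p * G.degree v + p ^ 2 * #G.edgeFinset := by
  have hcover : ∀ S, G.HasBadEdge u v S →
      (∃ w ∈ G.neighborFinset u, ∀ x ∈ ({w} : Finset V), S x = true) ∨
        (∃ w ∈ G.neighborFinset v, ∀ x ∈ ({w} : Finset V), S x = true) ∨
        ∃ e ∈ G.edgeFinset, ∀ x ∈ e.toFinset, S x = true := by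
    rintro S (⟨w, huw, -, hw⟩ | ⟨w, hvw, -, hw⟩ | ⟨a, b, hab, ha, hb, -⟩)
    · exact Or.inl ⟨w, by simpa using huw, by simpa using hw⟩
    · exact Or.inr (Or.inl ⟨w, by simpa using hvw, by simpa using hw⟩)
    · refine Or.inr (Or.inr ⟨s(a, b), by simpa using hab, ?_⟩)
      simp [Sym2.toFinset_mk_eq, ha, hb]
  have hedge : ∑ e ∈ G.edgeFinset, p ^ #e.toFinset = p ^ 2 * #G.edgeFinset := by
    rw [sum_congr rfl fun e he => by
      rw [Sym2.card_toFinset_of_not_isDiag e (G.not_isDiag_of_mem_edgeSet (by simpa using he))]]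
    simp [mul_comm]
  calc bernoulliProb p (G.HasBadEdge u v)
      ≤ _ := bernoulliProb_mono hp₀ hp₁ hcover
    _ ≤ _ := (bernoulliProb_or_le hp₀ hp₁).trans
      (add_le_add_right (bernoulliProb_or_le hp₀ hp₁) _)
    _ ≤ _ := by
      rw [← add_assoc]
      gcongr ?_ + ?_ + ?_
      · exact (bernoulliProb_exists_forall_mem_le hp₀ hp₁ _ _).trans_eq (by simp [mul_comm])
      · exact (bernoulliProb_exists_forall_mem_le hp₀ hp₁ _ _).trans_eq (by simp [mul_comm])
      · exact (bernoulliProb_exists_forall_mem_le hp₀ hp₁ _ _).trans_eq hedge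

end SimpleGraph

lemma le_ten_mul_of_exp_neg_mul_le {m mt : ℝ} (hm : 0 ≤ m)
    (h : Real.exp (-(1 / 10)) * m ≤ mt) :
    m ≤ 10 * mt := by
  nlinarith [Real.add_one_le_exp (-(1 / 10))]

theorem loneliness_lower_bound_general {V : Type*} [Fintype V] [DecidableEq V]
    (G : SimpleGraph V) [DecidableRel G.Adj] (mt p : ℝ)
    (hmt : Real.exp (-(1/10)) * (G.edgeFinset.card : ℝ) ≤ mt)
    (hp : p = 1 / (10 * Real.sqrt mt)) (u v : V)
    (hu : (G.degree u : ℝ) ≤ 2 * Real.sqrt mt)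
    (hv : (G.degree v : ℝ) ≤ 2 * Real.sqrt mt) :
    (∑ g : V → Bool,
        if ((∃ w, G.Adj u w ∧ w ≠ v ∧ g w = true) ∨
            (∃ w, G.Adj v w ∧ w ≠ u ∧ g w = true) ∨
            (∃ a b, G.Adj a b ∧ g a = true ∧ g b = true ∧
              a ≠ u ∧ a ≠ v ∧ b ≠ u ∧ b ≠ v))
          then ∏ w : V, (if g w then p else 1 - p) else 0) ≤ 1 / 2 ∧
    1 / 2 ≤ (∑ g : V → Bool,
        if (∀ a b, G.Adj a b → (g a = true ∨ a = u ∨ a = v) →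
            (g b = true ∨ b = u ∨ b = v) → (a = u ∧ b = v) ∨ (a = v ∧ b = u))
          then ∏ w : V, (if g w then p else 1 - p) else 0) := by
  have hbad : bernoulliProb p (G.HasBadEdge u v) ≤ 1 / 2 := by
    obtain hm | hm := Nat.eq_zero_or_pos #G.edgeFinset
    · have hno : ∀ a b, ¬G.Adj a b := fun a b hab => by
        simpa [card_eq_zero.mp hm] using G.mem_edgeFinset.2 (G.mem_edgeSet.2 hab)
      refine (bernoulliProb_eq_zero ?_).trans_le (by norm_num)
      rintro S (⟨_, h, -⟩ | ⟨_, h, -⟩ | ⟨_, _, h, -⟩) <;> exact hno _ _ h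
    have hm₁ : (1 : ℝ) ≤ #G.edgeFinset := by exact_mod_cast hm
    have hmt₁ : #G.edgeFinset ≤ 10 * mt := le_ten_mul_of_exp_neg_mul_le (by positivity) hmt
    have hmt₀ : 0 < mt := by linarith
    have hsqrt : 1 / 10 ≤ √mt := Real.le_sqrt_of_sq_le (by linarith)
    have hp₀ : 0 ≤ p := by rw [hp]; positivity
    have hp₁ : p ≤ 1 := by rw [hp, div_le_one (by positivity)]; linarith
    have hdeg : p * (2 * √mt) = 1 / 5 := by rw [hp]; field_simp; norm_num
    have hedge : p ^ 2 * #G.edgeFinset ≤ 1 / 10 := by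
      rw [hp, div_pow, mul_pow, Real.sq_sqrt hmt₀.le, div_mul_eq_mul_div,
        div_le_div_iff₀ (by positivity) (by norm_num)]
      linarith
    calc bernoulliProb p (G.HasBadEdge u v)
        ≤ p * G.degree u + p * G.degree v + p ^ 2 * #G.edgeFinset :=
          G.bernoulliProb_hasBadEdge_le u v hp₀ hp₁
      _ ≤ p * (2 * √mt) + p * (2 * √mt) + 1 / 10 := by gcongr
      _ = 1 / 2 := by rw [hdeg]; norm_num
  have hlonely : 1 / 2 ≤ bernoulliProb p (G.IsLonelyIn u v) := by
    rw [bernoulliProb_congr (G.isLonelyIn_iff_not_hasBadEdge u v), bernoulliProb_not]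
    linarith
  exact ⟨hbad, hlonely⟩

/-- Drawing each vertex independently with probability `p = 1/(10√m̃)`, the probability
of a "bad" event (a neighbor of `u` other than `v` in `S`, a neighbor of `v` other than
`u` in `S`, or an edge of `S` avoiding both `u` and `v`) is at most `1/2`; consequently
the pair `{u,v}` is lonely in `S` with probability at least `1/2`. -/
theorem loneliness_lower_bound {V : Type*} [Fintype V] [DecidableEq V]
    (G : SimpleGraph V) [DecidableRel G.Adj] (mt p : ℝ)
    (hmt0 : 0 < mt) (hmt : Real.exp (-(1/10)) * (G.edgeFinset.card : ℝ) ≤ mt)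
    (hp : p = 1 / (10 * Real.sqrt mt)) (u v : V)
    (hu : (G.degree u : ℝ) ≤ 2 * Real.sqrt mt)
    (hv : (G.degree v : ℝ) ≤ 2 * Real.sqrt mt) :
    (∑ g : V → Bool,
        if ((∃ w, G.Adj u w ∧ w ≠ v ∧ g w = true) ∨
            (∃ w, G.Adj v w ∧ w ≠ u ∧ g w = true) ∨
            (∃ a b, G.Adj a b ∧ g a = true ∧ g b = true ∧
              a ≠ u ∧ a ≠ v ∧ b ≠ u ∧ b ≠ v))
          then ∏ w : V, (if g w then p else 1 - p) else 0) ≤ 1 / 2 ∧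
    1 / 2 ≤ (∑ g : V → Bool,
        if (∀ a b, G.Adj a b → (g a = true ∨ a = u ∨ a = v) →
            (g b = true ∨ b = u ∨ b = v) → (a = u ∧ b = v) ∨ (a = v ∧ b = u))
          then ∏ w : V, (if g w then p else 1 - p) else 0) :=
  loneliness_lower_bound_general G mt p hmt hp u v hu hv
end

section
/- Let G be a graph over n vertices with m edges, let m̃ ≥ e^{-1/10}·m, and set k₁ = 3·√(m̃^{3/2}/n) and k₃ = √(n·√m̃). If u is a vertex with deg(u) > k₃, then the fraction of neighbors of u having degree at most k₁ is at least 1/4. -/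
/-- Tininess lower bound: if `deg(u) > k₃ = √(n√m̃)`, then at least a quarter of the
neighbors of `u` have degree at most `k₁ = 3√(m̃^{3/2}/n)`. -/
theorem tininess_lower_bound {V : Type*} [Fintype V] [DecidableEq V]
    (G : SimpleGraph V) [DecidableRel G.Adj] (mt : ℝ)
    (hmt : Real.exp (-(1/10)) * (G.edgeFinset.card : ℝ) ≤ mt)
    (k₁ k₃ : ℝ)
    (hk₁ : k₁ = 3 * Real.sqrt (mt ^ ((3:ℝ)/2) / (Fintype.card V : ℝ)))
    (hk₃ : k₃ = Real.sqrt ((Fintype.card V : ℝ) * Real.sqrt mt))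
    (u : V) (hu : k₃ < (G.degree u : ℝ)) :
    (1 / 4 : ℝ) * (G.degree u : ℝ) ≤
      (((G.neighborFinset u).filter (fun v => (G.degree v : ℝ) ≤ k₁)).card : ℝ) := by
  classical
  set n : ℝ := (Fintype.card V : ℝ) with hn_def
  set m : ℝ := (G.edgeFinset.card : ℝ) with hm_def
  set D : ℝ := (G.degree u : ℝ) with hD_def
  have hk₃0 : 0 ≤ k₃ := hk₃ ▸ Real.sqrt_nonneg _
  have hD : 0 < D := lt_of_le_of_lt hk₃0 hu
  have hn : 0 < n := by
    have : 0 < Fintype.card V := Fintype.card_pos_iff.mpr ⟨u⟩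
    rw [hn_def]; exact_mod_cast this
  have hm : 0 < m := by
    have hd : 0 < G.degree u := by
      rw [hD_def] at hD; exact_mod_cast hD
    have hsum := G.sum_degrees_eq_twice_card_edges
    have h1 : G.degree u ≤ ∑ v, G.degree v :=
      Finset.single_le_sum (f := fun v => G.degree v) (fun _ _ => Nat.zero_le _) (Finset.mem_univ u)
    have : 0 < G.edgeFinset.card := by omega
    rw [hm_def]; exact_mod_cast this
  have hmt0 : 0 < mt := lt_of_lt_of_le (mul_pos (Real.exp_pos _) hm) hmt
  -- m ≤ (10/9) * mt
  have hm_le : m ≤ (10/9) * mt := by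
    have h9 : (9/10 : ℝ) ≤ Real.exp (-(1/10)) := by
      have := Real.add_one_le_exp (-(1/10))
      linarith
    have : (9/10 : ℝ) * m ≤ Real.exp (-(1/10)) * m :=
      mul_le_mul_of_nonneg_right h9 hm.le
    linarith
  -- k₁ * k₃ = 3 * mt
  have h32 : mt ^ ((3:ℝ)/2) = mt * Real.sqrt mt := by
    rw [show (3:ℝ)/2 = 1 + 1/2 by norm_num, Real.rpow_add hmt0, Real.rpow_one,
      ← Real.sqrt_eq_rpow]
  have hsq : Real.sqrt mt * Real.sqrt mt = mt := Real.mul_self_sqrt hmt0.le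
  have hkk : k₁ * k₃ = 3 * mt := by
    rw [hk₁, hk₃, mul_assoc, ← Real.sqrt_mul (by positivity)]
    rw [show mt ^ ((3:ℝ)/2) / n * (n * Real.sqrt mt)
        = mt ^ ((3:ℝ)/2) * Real.sqrt mt by field_simp]
    rw [h32, show mt * Real.sqrt mt * Real.sqrt mt = mt ^ 2 by
      rw [mul_assoc, hsq]; ring]
    rw [Real.sqrt_sq hmt0.le]
  have hk₁0 : 0 < k₁ := by rw [hk₁]; positivity
  set tiny := (G.neighborFinset u).filter (fun v => (G.degree v : ℝ) ≤ k₁) with htiny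
  set big := (G.neighborFinset u).filter (fun v => ¬ (G.degree v : ℝ) ≤ k₁) with hbig
  have hsplit : (tiny.card : ℝ) + (big.card : ℝ) = D := by
    have : tiny.card + big.card = G.degree u := by
      rw [htiny, hbig, Finset.card_filter_add_card_filter_not]
      rfl
    rw [hD_def]; exact_mod_cast this
  have hbig_le : k₁ * (big.card : ℝ) ≤ 2 * m := by
    have h1 : ∀ v ∈ big, k₁ ≤ (G.degree v : ℝ) := by
      intro v hv
      rw [hbig, Finset.mem_filter] at hv
      exact (not_le.mp hv.2).le
    have h2 : (big.card : ℝ) * k₁ ≤ ∑ v ∈ big, (G.degree v : ℝ) := by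
      have := Finset.card_nsmul_le_sum big (fun v => (G.degree v : ℝ)) k₁ h1
      simpa [nsmul_eq_mul] using this
    have h3 : ∑ v ∈ big, (G.degree v : ℝ) ≤ ∑ v, (G.degree v : ℝ) :=
      Finset.sum_le_sum_of_subset_of_nonneg (Finset.subset_univ _)
        (fun _ _ _ => by positivity)
    have h4 : ∑ v, (G.degree v : ℝ) = 2 * m := by
      rw [hm_def]; exact_mod_cast G.sum_degrees_eq_twice_card_edges
    linarith
  have hchain : 3 * mt * (big.card : ℝ) ≤ 2 * m * D := by
    have h1 : k₁ * (big.card : ℝ) * k₃ ≤ 2 * m * k₃ :=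
      mul_le_mul_of_nonneg_right hbig_le hk₃0
    have h2 : 2 * m * k₃ ≤ 2 * m * D :=
      mul_le_mul_of_nonneg_left hu.le (by linarith)
    calc 3 * mt * (big.card : ℝ) = k₁ * (big.card : ℝ) * k₃ := by
          rw [← hkk]; ring
      _ ≤ 2 * m * D := le_trans h1 h2
  have key : (big.card : ℝ) ≤ (3/4) * D := by
    have h1 : m * D ≤ (10/9) * mt * D := mul_le_mul_of_nonneg_right hm_le hD.le
    nlinarith [mul_nonneg hmt0.le hD.le]
  linarith
end

section
/- Let G be a graph with m edges, m̃ ≥ max{36, e^{-1/10}m}, k = √m̃, and let u be a vertex with deg(u) ≥ 2k. Draw a set S by including each non-u vertex independently with probability 1/(8k). Then the probability that S contains at least one neighbor of u minus the expected number of edges with both endpoints in S is at least (1 - (1 - 1/(8k))^{2k}) - m/(64m̃) ≥ 1 - e^{-1/4} - e^{1/10}/64 ≥ 1/5. -/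
open scoped Classical

open Finset

lemma sum_prod_bool {V : Type*} [Fintype V] [DecidableEq V] (f : V → Bool → ℝ) :
    ∑ g : V → Bool, ∏ w, f w (g w) = ∏ w, (f w false + f w true) := by
  rw [← Fintype.prod_sum f]
  congr 1; ext w
  simp [Fintype.sum_bool, add_comm]

lemma sum_event_false {V : Type*} [Fintype V] [DecidableEq V] (p : ℝ) (N : Finset V) :
    ∑ g : V → Bool, (if ∀ w ∈ N, g w = false
        then ∏ w, (if g w then p else 1 - p) else 0)
      = (1 - p) ^ N.card := by
  set F : V → Bool → ℝ :=
    fun w b => if w ∈ N ∧ b = true then 0 else if b then p else 1 - p with hF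
  have h : ∀ g : V → Bool, (if ∀ w ∈ N, g w = false
        then ∏ w, (if g w then p else 1 - p) else 0) = ∏ w, F w (g w) := by
    intro g
    split_ifs with hc
    · apply Finset.prod_congr rfl
      intro w _
      rcases hw : g w with _ | _
      · simp [hF, hw]
      · have : w ∉ N := fun hN => by simp [hc w hN] at hw
        simp [hF, hw, this]
    · push_neg at hc
      obtain ⟨w, hwN, hw⟩ := hc
      rw [eq_comm]
      apply Finset.prod_eq_zero (Finset.mem_univ w)
      simp [hF, hwN, hw]
  calc ∑ g : V → Bool, (if ∀ w ∈ N, g w = false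
        then ∏ w, (if g w then p else 1 - p) else 0)
      = ∑ g : V → Bool, ∏ w, F w (g w) := Finset.sum_congr rfl (fun g _ => h g)
    _ = ∏ w, (F w false + F w true) := sum_prod_bool F
    _ = (1 - p) ^ N.card := by
        have h2 : ∀ w : V, (F w false + F w true) = if w ∈ N then (1 - p) else 1 := by
          intro w
          by_cases hw : w ∈ N <;> simp [hF, hw]
        simp_rw [h2]
        rw [Finset.prod_ite_mem, Finset.univ_inter, Finset.prod_const]

lemma sum_event_pair {V : Type*} [Fintype V] [DecidableEq V] (p : ℝ) (a b : V)
    (hab : a ≠ b) :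
    ∑ g : V → Bool, (∏ w, (if g w then p else 1 - p)) *
        (if g a = true ∧ g b = true then 1 else 0)
      = p ^ 2 := by
  set F : V → Bool → ℝ :=
    fun w c => if (w = a ∨ w = b) ∧ c = false then 0 else if c then p else 1 - p with hF
  have h : ∀ g : V → Bool, (∏ w, (if g w then p else 1 - p)) *
        (if g a = true ∧ g b = true then 1 else 0) = ∏ w, F w (g w) := by
    intro g
    split_ifs with hc
    · rw [mul_one]
      apply Finset.prod_congr rfl
      intro w _
      rcases hw : g w with _ | _
      · have : ¬(w = a ∨ w = b) := by
          rintro (rfl | rfl) <;> simp [hc.1, hc.2] at hw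
        simp [hF, hw, this]
      · simp [hF, hw]
    · rw [mul_zero, eq_comm]
      rw [not_and_or] at hc
      rcases hc with hc | hc
      · exact Finset.prod_eq_zero (Finset.mem_univ a) (by simp [hF, Bool.not_eq_true] at hc ⊢; simp [hc])
      · exact Finset.prod_eq_zero (Finset.mem_univ b) (by simp [hF, Bool.not_eq_true] at hc ⊢; simp [hc])
  calc ∑ g : V → Bool, (∏ w, (if g w then p else 1 - p)) *
        (if g a = true ∧ g b = true then 1 else 0)
      = ∑ g : V → Bool, ∏ w, F w (g w) := Finset.sum_congr rfl (fun g _ => h g)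
    _ = ∏ w, (F w false + F w true) := sum_prod_bool F
    _ = p ^ 2 := by
        have : ∀ w : V, (F w false + F w true) = if w = a ∨ w = b then p else 1 := by
          intro w
          by_cases hw : w = a ∨ w = b <;> simp [hF, hw]
        have h3 : ∀ x : V, (if x = a ∨ x = b then p else 1)
            = if x ∈ ({a, b} : Finset V) then p else 1 := by
          intro x; simp [Finset.mem_insert]
        simp_rw [this, h3]
        rw [Finset.prod_ite_mem, Finset.univ_inter, Finset.prod_const,
          Finset.card_insert_of_notMem (by simp [hab]), Finset.card_singleton]



/-- High-degree test, completeness direction: for `deg(u) ≥ 2k` with `k = √m̃`,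
drawing each non-`u` vertex independently with probability `1/(8k)`, the probability
that `S` contains a neighbor of `u` minus the expected number of edges with both
endpoints in `S` is at least `(1 - (1 - 1/(8k))^{2k}) - m/(64m̃) ≥
1 - e^{-1/4} - e^{1/10}/64 ≥ 1/5`.  (`S = {w ≠ u | g w}`; the number of edges inside
`S` is half the number of ordered adjacent pairs inside `S`.) -/
theorem high_degree_test_completeness {V : Type*} [Fintype V] [DecidableEq V]
    (G : SimpleGraph V) [DecidableRel G.Adj] (mt k : ℝ)
    (hmt : max 36 (Real.exp (-(1/10)) * (G.edgeFinset.card : ℝ)) ≤ mt)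
    (hk : k = Real.sqrt mt) (u : V) (hu : 2 * k ≤ (G.degree u : ℝ)) :
    ((1 - (1 - 1/(8*k)) ^ ((2:ℝ)*k)) - (G.edgeFinset.card : ℝ)/(64*mt)
        ≤ (∑ g : V → Bool,
            if (∃ w, G.Adj u w ∧ g w = true)
              then ∏ w : V, (if g w then 1/(8*k) else 1 - 1/(8*k)) else 0)
          - (∑ g : V → Bool,
              (∏ w : V, (if g w then 1/(8*k) else 1 - 1/(8*k))) *
              ((((Finset.univ : Finset (V × V)).filter
                  (fun ab => G.Adj ab.1 ab.2 ∧ ab.1 ≠ u ∧ ab.2 ≠ u ∧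
                    g ab.1 = true ∧ g ab.2 = true)).card : ℝ) / 2))) ∧
    (1 - Real.exp (-(1/4)) - Real.exp (1/10) / 64
        ≤ (1 - (1 - 1/(8*k)) ^ ((2:ℝ)*k)) - (G.edgeFinset.card : ℝ)/(64*mt)) ∧
    ((1/5 : ℝ) ≤ 1 - Real.exp (-(1/4)) - Real.exp (1/10) / 64) := by
  have hmt36 : (36 : ℝ) ≤ mt := le_trans (le_max_left _ _) hmt
  have hk6 : (6 : ℝ) ≤ k := by
    rw [hk, show (6:ℝ) = Real.sqrt 36 by
      rw [show (36:ℝ) = 6^2 by norm_num, Real.sqrt_sq (by norm_num)]]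
    exact Real.sqrt_le_sqrt hmt36
  have hkpos : (0:ℝ) < k := by linarith
  set p : ℝ := 1/(8*k) with hp
  have hp0 : 0 < p := by positivity
  have hp48 : p ≤ 1/48 := by
    rw [hp]
    rw [div_le_div_iff₀ (by linarith) (by norm_num)]
    linarith
  have h1p0 : 0 < 1 - p := by linarith
  have h1p1 : 1 - p < 1 := by linarith
  have hksq : k ^ 2 = mt := by
    rw [hk, Real.sq_sqrt (by linarith : (0:ℝ) ≤ mt)]
  set m : ℝ := (G.edgeFinset.card : ℝ) with hm
  have hm0 : 0 ≤ m := by positivity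
  -- the probability part
  have hprob : (∑ g : V → Bool,
            if (∃ w, G.Adj u w ∧ g w = true)
              then ∏ w : V, (if g w then p else 1 - p) else 0)
      = 1 - (1 - p) ^ (G.degree u) := by
    have hone : ∑ g : V → Bool, ∏ w : V, (if g w then p else 1 - p) = 1 := by
      rw [sum_prod_bool (fun w b => if b then p else 1 - p)]
      simp
    have hcompl : (∑ g : V → Bool,
            if ¬ (∃ w, G.Adj u w ∧ g w = true)
              then ∏ w : V, (if g w then p else 1 - p) else 0)
        = (1 - p) ^ (G.degree u) := by
      rw [← SimpleGraph.card_neighborFinset_eq_degree,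
        ← sum_event_false p (G.neighborFinset u)]
      apply Finset.sum_congr rfl
      intro g _
      congr 1
      simp only [eq_iff_iff, not_exists, not_and, SimpleGraph.mem_neighborFinset,
        Bool.not_eq_true]
    have hsplit : (∑ g : V → Bool,
            if (∃ w, G.Adj u w ∧ g w = true)
              then ∏ w : V, (if g w then p else 1 - p) else 0)
        + (∑ g : V → Bool,
            if ¬ (∃ w, G.Adj u w ∧ g w = true)
              then ∏ w : V, (if g w then p else 1 - p) else 0)
        = ∑ g : V → Bool, ∏ w : V, (if g w then p else 1 - p) := by
      rw [← Finset.sum_add_distrib]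
      apply Finset.sum_congr rfl
      intro g _
      by_cases hc : (∃ w, G.Adj u w ∧ g w = true) <;> simp [hc]
    rw [hcompl, hone] at hsplit
    linarith
  -- the expectation part
  have hexp : (∑ g : V → Bool,
              (∏ w : V, (if g w then p else 1 - p)) *
              ((((Finset.univ : Finset (V × V)).filter
                  (fun ab => G.Adj ab.1 ab.2 ∧ ab.1 ≠ u ∧ ab.2 ≠ u ∧
                    g ab.1 = true ∧ g ab.2 = true)).card : ℝ) / 2))
      ≤ m * p ^ 2 := by
    have hcard : ∀ g : V → Bool,
        ((((Finset.univ : Finset (V × V)).filter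
            (fun ab => G.Adj ab.1 ab.2 ∧ ab.1 ≠ u ∧ ab.2 ≠ u ∧
              g ab.1 = true ∧ g ab.2 = true)).card : ℝ))
        = ∑ ab : V × V, (if G.Adj ab.1 ab.2 ∧ ab.1 ≠ u ∧ ab.2 ≠ u then
            (if g ab.1 = true ∧ g ab.2 = true then (1:ℝ) else 0) else 0) := by
      intro g
      rw [Finset.card_filter]
      push_cast
      apply Finset.sum_congr rfl
      intro ab _
      by_cases h1 : G.Adj ab.1 ab.2 ∧ ab.1 ≠ u ∧ ab.2 ≠ u
        <;> by_cases h2 : g ab.1 = true ∧ g ab.2 = true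
        <;> simp [h1, h2] <;> tauto
    calc (∑ g : V → Bool,
              (∏ w : V, (if g w then p else 1 - p)) *
              ((((Finset.univ : Finset (V × V)).filter
                  (fun ab => G.Adj ab.1 ab.2 ∧ ab.1 ≠ u ∧ ab.2 ≠ u ∧
                    g ab.1 = true ∧ g ab.2 = true)).card : ℝ) / 2))
        = (∑ ab : V × V, (if G.Adj ab.1 ab.2 ∧ ab.1 ≠ u ∧ ab.2 ≠ u then
            (∑ g : V → Bool, (∏ w : V, (if g w then p else 1 - p)) *
              (if g ab.1 = true ∧ g ab.2 = true then (1:ℝ) else 0)) else 0)) / 2 := by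
          simp_rw [← mul_div_assoc]
          rw [← Finset.sum_div]
          congr 1
          simp_rw [hcard, Finset.mul_sum]
          rw [Finset.sum_comm]
          apply Finset.sum_congr rfl
          intro ab _
          by_cases h1 : G.Adj ab.1 ab.2 ∧ ab.1 ≠ u ∧ ab.2 ≠ u
          · rw [if_pos h1]
            apply Finset.sum_congr rfl
            intro g _
            rw [if_pos h1]
          · rw [if_neg h1]
            apply Finset.sum_eq_zero
            intro g _
            rw [if_neg h1, mul_zero]
      _ = (∑ ab : V × V, (if G.Adj ab.1 ab.2 ∧ ab.1 ≠ u ∧ ab.2 ≠ u then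
            p ^ 2 else 0)) / 2 := by
          congr 1
          apply Finset.sum_congr rfl
          intro ab _
          by_cases h1 : G.Adj ab.1 ab.2 ∧ ab.1 ≠ u ∧ ab.2 ≠ u
          · rw [if_pos h1, if_pos h1]
            exact sum_event_pair p ab.1 ab.2 h1.1.ne
          · simp [h1]
      _ ≤ m * p ^ 2 := by
          rw [← Finset.sum_filter]
          rw [Finset.sum_const, nsmul_eq_mul]
          have hsub : ((Finset.univ : Finset (V × V)).filter
              (fun ab => G.Adj ab.1 ab.2 ∧ ab.1 ≠ u ∧ ab.2 ≠ u)).card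
              ≤ ((Finset.univ : Finset (V × V)).filter
              (fun ab => G.Adj ab.1 ab.2)).card := by
            apply Finset.card_le_card
            intro ab hab
            simp only [Finset.mem_filter] at hab ⊢
            exact ⟨hab.1, hab.2.1⟩
          have h2m : ((Finset.univ : Finset (V × V)).filter
              (fun ab => G.Adj ab.1 ab.2)).card = 2 * G.edgeFinset.card := by
            rw [SimpleGraph.two_mul_card_edgeFinset]
          have : (((Finset.univ : Finset (V × V)).filter
              (fun ab => G.Adj ab.1 ab.2 ∧ ab.1 ≠ u ∧ ab.2 ≠ u)).card : ℝ)
              ≤ 2 * m := by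
            rw [hm]
            exact_mod_cast h2m ▸ hsub
          have hps : (0:ℝ) ≤ p ^ 2 := by positivity
          calc (((Finset.univ : Finset (V × V)).filter
              (fun ab => G.Adj ab.1 ab.2 ∧ ab.1 ≠ u ∧ ab.2 ≠ u)).card : ℝ) * p ^ 2 / 2
              ≤ 2 * m * p ^ 2 / 2 := by
                apply div_le_div_of_nonneg_right ?_ (by norm_num)
                exact mul_le_mul_of_nonneg_right this hps
            _ = m * p ^ 2 := by ring
  -- degree bound
  have hdeg : (1 - p) ^ (G.degree u) ≤ (1 - p) ^ ((2:ℝ)*k) := by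
    rw [← Real.rpow_natCast (1 - p) (G.degree u)]
    exact Real.rpow_le_rpow_of_exponent_ge h1p0 (le_of_lt h1p1)
      (by exact_mod_cast hu)
  -- m p^2 = m / (64 mt)
  have hmp : m * p ^ 2 = m / (64 * mt) := by
    have hp2 : p ^ 2 = 1/(64 * mt) := by
      rw [hp, ← hksq, div_pow, one_pow, mul_pow]
      norm_num
    rw [hp2, mul_one_div]
  refine ⟨?_, ?_, ?_⟩
  · have := hprob
    have h2 := hexp
    have h3 : 1 - (1 - p) ^ ((2:ℝ)*k) - m / (64*mt)
        ≤ (1 - (1 - p) ^ (G.degree u)) - m * p ^ 2 := by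
      rw [hmp]; linarith
    calc 1 - (1 - p) ^ ((2:ℝ)*k) - m / (64*mt)
        ≤ (1 - (1 - p) ^ (G.degree u)) - m * p ^ 2 := h3
      _ ≤ _ := by rw [← hprob]; linarith
  · -- second inequality
    have hA : (1 - p) ^ ((2:ℝ)*k) ≤ Real.exp (-(1/4)) := by
      have h1 : 1 - p ≤ Real.exp (-p) := by
        have := Real.add_one_le_exp (-p)
        linarith
      have h2 : (1 - p) ^ ((2:ℝ)*k) ≤ (Real.exp (-p)) ^ ((2:ℝ)*k) :=
        Real.rpow_le_rpow (le_of_lt h1p0) h1 (by positivity)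
      have h3 : (Real.exp (-p)) ^ ((2:ℝ)*k) = Real.exp (-(1/4)) := by
        rw [← Real.exp_log (Real.exp_pos (-p)), Real.log_exp,
          ← Real.exp_mul]
        congr 1
        rw [hp]
        field_simp
        ring
      linarith [h2, h3.le]
    have hB : m / (64 * mt) ≤ Real.exp (1/10) / 64 := by
      have hmle : m ≤ Real.exp (1/10) * mt := by
        have h1 : Real.exp (-(1/10)) * m ≤ mt := le_trans (le_max_right _ _) hmt
        have h2 := mul_le_mul_of_nonneg_left h1 (Real.exp_pos (1/10)).le
        rw [← mul_assoc, ← Real.exp_add] at h2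
        simpa using h2
      rw [div_le_div_iff₀ (by linarith) (by norm_num)]
      calc m * 64 ≤ (Real.exp (1/10) * mt) * 64 := by
            exact mul_le_mul_of_nonneg_right hmle (by norm_num)
        _ = Real.exp (1/10) * (64 * mt) := by ring
    linarith
  · -- numeric
    have hA : Real.exp (-(1/4)) ≤ (64/65 : ℝ)^16 := by
      have h1 : ((65:ℝ)/64)^16 ≤ Real.exp (1/4) := by
        have h2 : (65:ℝ)/64 ≤ Real.exp (1/64) := by
          have := Real.add_one_le_exp (1/64 : ℝ)
          linarith
        calc ((65:ℝ)/64)^16 ≤ (Real.exp (1/64))^16 :=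
              pow_le_pow_left₀ (by norm_num) h2 16
          _ = Real.exp (1/4) := by
              rw [← Real.exp_nat_mul]; norm_num
      have hc : ((64:ℝ)/65)^16 = (((65:ℝ)/64)^16)⁻¹ := by
        rw [← inv_pow]; norm_num
      rw [Real.exp_neg, hc]
      gcongr
    have hB : Real.exp (1/10) ≤ ((20:ℝ)/19)^2 := by
      have h2 : Real.exp (1/20 : ℝ) ≤ 20/19 := by
        have h3 := Real.add_one_le_exp (-(1/20) : ℝ)
        have h4 : (19:ℝ)/20 ≤ Real.exp (-(1/20)) := by linarith
        have h5 : Real.exp (1/20 : ℝ) * Real.exp (-(1/20) : ℝ) = 1 := by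
          rw [← Real.exp_add]; norm_num
        nlinarith [mul_le_mul_of_nonneg_left h4 (Real.exp_pos (1/20 : ℝ)).le, h5]
      calc Real.exp (1/10 : ℝ) = (Real.exp (1/20))^2 := by
            rw [← Real.exp_nat_mul]; norm_num
        _ ≤ ((20:ℝ)/19)^2 := pow_le_pow_left₀ (Real.exp_pos _).le h2 2
    nlinarith [hA, hB]
end

section
/- For integers n ≥ 16 and 9 ≤ m ≤ n²/16, define k = ⌊√m⌋, m' = m - C(k,2), h = ⌈2m'/n⌉, ℓ = ⌈m'/h⌉. Then k + h + ℓ ≤ n. -/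
/-- The clique-plus-biclique construction fits within `n` vertices. -/
theorem construction_fits (n m : ℕ) (hn : 16 ≤ n) (hm9 : 9 ≤ m)
    (hm : 16 * m ≤ n ^ 2) :
    Nat.sqrt m + (2 * (m - (Nat.sqrt m).choose 2)) ⌈/⌉ n +
      (m - (Nat.sqrt m).choose 2) ⌈/⌉ ((2 * (m - (Nat.sqrt m).choose 2)) ⌈/⌉ n)
      ≤ n := by
  set k := Nat.sqrt m with hk
  set m' := m - k.choose 2 with hm'
  set b := (2 * m') ⌈/⌉ n with hb
  set l := m' ⌈/⌉ b with hl
  have hn0 : 0 < n := by omega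
  have hk3 : 3 ≤ k := by
    have h9 : Nat.sqrt 9 = 3 := by norm_num [Nat.sqrt]
    have := Nat.sqrt_le_sqrt hm9
    omega
  have hksq : k * k ≤ m := by
    have := Nat.sqrt_le' m
    nlinarith
  have hch : k.choose 2 = k * (k - 1) / 2 := Nat.choose_two_right k
  have hchlt : k.choose 2 < m := by
    rw [hch]
    have h1 : k * (k - 1) / 2 ≤ k * k / 2 := by
      apply Nat.div_le_div_right
      exact Nat.mul_le_mul_left k (Nat.sub_le k 1)
    have h2 : k * k / 2 < k * k := by
      have : 0 < k * k := by nlinarith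
      omega
    omega
  have hm'1 : 1 ≤ m' := by omega
  have hmm : m' ≤ m := Nat.sub_le _ _
  -- 4k ≤ n
  have h4k : 4 * k ≤ n := by nlinarith
  -- b ≥ 1
  have hb1 : 1 ≤ b := by
    rw [hb, Nat.ceilDiv_eq_add_pred_div]
    exact (Nat.one_le_div_iff hn0).2 (by omega)
  -- n * b ≥ 2 * m'
  have hnb : 2 * m' ≤ n * b := by
    have := le_smul_ceilDiv (α := ℕ) (b := 2 * m') hn0
    simpa [smul_eq_mul, ← hb] using this
  -- n * b ≤ 2m' + n - 1
  have hnb2 : n * b ≤ 2 * m' + n - 1 := by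
    rw [hb, Nat.ceilDiv_eq_add_pred_div]
    exact Nat.mul_div_le _ _
  -- 8b ≤ n + 7
  have h8b : 8 * b ≤ n + 7 := by
    have s1 : 8 * (n * b) < 16 * m + 8 * n := by omega
    have s2 : n * (8 * b) < n * (n + 8) := by nlinarith
    have := Nat.lt_of_mul_lt_mul_left s2
    omega
  -- b * l ≤ m' + b - 1
  have hbl : b * l ≤ m' + b - 1 := by
    rw [hl, Nat.ceilDiv_eq_add_pred_div]
    exact Nat.mul_div_le _ _
  -- 2l ≤ n + 1
  have h2l : 2 * l ≤ n + 1 := by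
    have e1 : b * (2 * l) = 2 * (b * l) := by ring
    have e2 : b * (n + 2) = n * b + 2 * b := by ring
    have s2 : b * (2 * l) < b * (n + 2) := by omega
    have := Nat.lt_of_mul_lt_mul_left s2
    omega
  omega
end

section
/- For integers n ≥ 16 and 9 ≤ m ≤ n²/16, with k = ⌊√m⌋, m' = m - C(k,2), h = ⌈2m'/n⌉ and ℓ = ⌈m'/h⌉, it holds that m/2 ≤ h·ℓ ≤ m. -/
/-- The biclique in the construction has between `m/2` and `m` edges. -/
theorem biclique_edge_bounds (n m : ℕ) (hn : 16 ≤ n) (hm9 : 9 ≤ m)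
    (hm : 16 * m ≤ n ^ 2) :
    (m : ℝ) / 2 ≤
        (((2 * (m - (Nat.sqrt m).choose 2)) ⌈/⌉ n) *
          ((m - (Nat.sqrt m).choose 2) ⌈/⌉ ((2 * (m - (Nat.sqrt m).choose 2)) ⌈/⌉ n)) : ℕ)
      ∧ ((2 * (m - (Nat.sqrt m).choose 2)) ⌈/⌉ n) *
          ((m - (Nat.sqrt m).choose 2) ⌈/⌉ ((2 * (m - (Nat.sqrt m).choose 2)) ⌈/⌉ n))
        ≤ m := by
  set k := Nat.sqrt m with hkdef
  set C := k.choose 2 with hCdef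
  set m' := m - C with hm'def
  set h := (2 * m') ⌈/⌉ n with hhdef
  set ℓ := m' ⌈/⌉ h with hldef
  have hnpos : 0 < n := by omega
  have hk3 : 3 ≤ k := by
    rw [hkdef, Nat.le_sqrt]; omega
  have hkk : k * k ≤ m := by have := Nat.sqrt_le' m; simpa [hkdef, pow_two] using this
  have hmlt : m < (k + 1) * (k + 1) := by
    have := Nat.lt_succ_sqrt' m; simpa [hkdef, pow_two, Nat.succ_eq_add_one] using this
  have h2C : 2 * C = k * (k - 1) := by
    rw [hCdef, Nat.choose_two_right, Nat.mul_div_cancel']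
    obtain ⟨j, hj⟩ : ∃ j, k = j + 1 := ⟨k - 1, by omega⟩
    rw [hj]
    simpa [Nat.mul_comm] using (Nat.even_mul_succ_self j).two_dvd
  have hCm : 2 * C ≤ m := by
    have : k * (k - 1) ≤ k * k := Nat.mul_le_mul_left k (by omega)
    omega
  have hm'2 : m ≤ 2 * m' := by omega
  have hm'pos : 0 < m' := by omega
  have hhpos : 0 < h := by
    by_contra hh0
    have : (2 * m') ⌈/⌉ n ≤ 0 := by omega
    rw [ceilDiv_le_iff_le_mul hnpos] at this
    omega
  have hle : m' ≤ h * ℓ := by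
    have := le_smul_ceilDiv (b := m') hhpos
    simpa [hldef, smul_eq_mul] using this
  have hn4k : 4 * k ≤ n := by
    have h1 : (4 * k) ^ 2 ≤ n ^ 2 := by nlinarith [hkk, hm]
    exact (Nat.pow_le_pow_iff_left (by norm_num)).mp h1
  have hhC : h ≤ C + 1 := by
    rw [hhdef, ceilDiv_le_iff_le_mul hnpos]
    have key : 2 * m ≤ n * (C + 1) := by
      have h4 : 4 * k * (C + 1) ≤ n * (C + 1) := Nat.mul_le_mul_right _ hn4k
      have hk1 : k - 1 + 1 = k := by omega
      nlinarith [hmlt, h2C, hk3, h4, hk1]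
    omega
  have hub : h * ℓ ≤ m := by
    have hℓ : ℓ = (m' + h - 1) / h := by rw [hldef, Nat.ceilDiv_eq_add_pred_div]
    have h1 : h * ℓ ≤ m' + h - 1 := by rw [hℓ]; exact Nat.mul_div_le _ _
    omega
  refine ⟨?_, hub⟩
  have hnat : m ≤ 2 * (h * ℓ) := by omega
  have := (Nat.cast_le (α := ℝ)).mpr hnat
  push_cast at this ⊢
  linarith
end
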